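/- Let α > 0, let n be an integer with |n| ≥ 1, and let κ and R satisfy −(r₀² + n²)/(2R²) < κ < α⁻¹ and R > ( 6(1 + n²(2 ln 2 − 1)) / (α⁻¹ − κ) )^{1/2}. Then for every b > 0 there exists t₀ > 0 such that γ_κ(t₀ u₀) = 0, where u₀ is the tent function with parameters a = R/2 and b; in particular the Nehari set M is nonempty. -/

import Mathlib

/-!
For a fixed profile `u ∈ X` the quadratic part of `γ_κ(t u)` is `t²` times
`½ ∫ (r u'² + n² u² / r) - (α⁻¹ - κ) ∫ r u²`, while the saturated part
`α⁻¹ ∫ r (t u)² / (1 + α (t u)²)` lies between `α⁻¹ t² ∫ r u² - t⁴ ∫ r u⁴` and `α⁻² R² / 2`.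
Hence `t ↦ γ_κ(t u)` is positive for small `t` when `½ ∫ (r u'² + n² u² / r) + κ ∫ r u² > 0`,
negative for large `t` when the quadratic coefficient is negative, and vanishes in between by the
intermediate value theorem. For the tent, `½ ∫ (r u'² + n² u² / r) = b² (1 + n² (2 log 2 - 1))`
and `∫ r u² = b² R² / 6`; the quadratic coefficient is then negative by the lower bound on `R`,
and the other quantity is positive by the lower bound on `κ`, since `J₀(3) < 0` forces `r₀ ≤ 3`.
-/

open MeasureTheory Set Filter

noncomputable section

/-- The Bessel function `J₀`. -/
def besselJ0 (x : ℝ) : ℝ :=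
  ∑' m : ℕ, (-1 : ℝ) ^ m * (x / 2) ^ (2 * m) / ((Nat.factorial m : ℝ)) ^ 2

/-- The smallest positive zero of `J₀` (≈ 2.404826). -/
def besselR0 : ℝ := sInf {x : ℝ | 0 < x ∧ besselJ0 x = 0}

/-- `u` is a classical solution of the `n`-vortex equation with parameters `(α, n, κ, R)`. -/
def IsVortexSol (α : ℝ) (n : ℤ) (κ R : ℝ) (u : ℝ → ℝ) : Prop :=
  ContinuousOn u (Icc 0 R) ∧
  (∀ r ∈ Ioo (0 : ℝ) R, DifferentiableAt ℝ u r ∧ DifferentiableAt ℝ (deriv u) r) ∧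
  u 0 = 0 ∧ u R = 0 ∧
  ∀ r ∈ Ioo (0 : ℝ) R,
    deriv (fun s => s * deriv u s) r - ((n : ℝ) ^ 2 / r) * u r
      + 2 * r * (u r) ^ 3 / (1 + α * (u r) ^ 2) - 2 * κ * r * u r = 0

/-- `u` has finite energy. -/
def FiniteEnergy (α R : ℝ) (u : ℝ → ℝ) : Prop :=
  IntegrableOn
    (fun r => r * (deriv u r) ^ 2 + (u r) ^ 2 / r + r * Real.log (1 + α * (u r) ^ 2))
    (Ioo 0 R)

/-- The energy flux `Q(u) = 2π ∫₀^R r u(r)² dr`. -/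
def fluxQ (R : ℝ) (u : ℝ → ℝ) : ℝ := 2 * Real.pi * ∫ r in Ioo (0 : ℝ) R, r * (u r) ^ 2

/-- The tent function with parameters `a` and `b`. -/
def tent (a b : ℝ) : ℝ → ℝ := fun r => if r ≤ a then (b / a) * r else (b / a) * (2 * a - r)

/-- The action functional `I_κ`. -/
def actI (α : ℝ) (n : ℤ) (κ R : ℝ) (u : ℝ → ℝ) : ℝ :=
  (1 / 2) * ∫ r in Ioo (0 : ℝ) R,
    (r * (deriv u r) ^ 2 + ((n : ℝ) ^ 2 / r) * (u r) ^ 2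
      - 2 * (α⁻¹ - κ) * r * (u r) ^ 2 + 2 * (α ^ 2)⁻¹ * r * Real.log (1 + α * (u r) ^ 2))

/-- The action functional `𝓘`. -/
def actI0 (α : ℝ) (n : ℤ) (R : ℝ) (u : ℝ → ℝ) : ℝ :=
  (1 / 2) * ∫ r in Ioo (0 : ℝ) R,
    (r * (deriv u r) ^ 2 + ((n : ℝ) ^ 2 / r) * (u r) ^ 2
      - 2 * α⁻¹ * r * (u r) ^ 2 + 2 * (α ^ 2)⁻¹ * r * Real.log (1 + α * (u r) ^ 2))

/-- The functional `γ_κ`. -/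
def gammaK (α : ℝ) (n : ℤ) (κ R : ℝ) (u : ℝ → ℝ) : ℝ :=
  (1 / 2) * ∫ r in Ioo (0 : ℝ) R,
    (r * (deriv u r) ^ 2 + ((n : ℝ) ^ 2 / r) * (u r) ^ 2
      - 2 * (α⁻¹ - κ) * r * (u r) ^ 2 + 2 * α⁻¹ * r * (u r) ^ 2 / (1 + α * (u r) ^ 2))

/-- Membership in the class `X`. -/
def MemX (R : ℝ) (u : ℝ → ℝ) : Prop :=
  ContinuousOn u (Icc 0 R) ∧ ContDiffOn ℝ 1 u (Ioo 0 R) ∧ u 0 = 0 ∧ u R = 0 ∧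
    IntegrableOn (fun r => r * (deriv u r) ^ 2 + (u r) ^ 2 / r) (Ioo 0 R)

/-- Membership in the class `X`, allowing finitely many exceptional points. -/
def MemX' (R : ℝ) (u : ℝ → ℝ) : Prop :=
  ContinuousOn u (Icc 0 R) ∧ (∃ S : Finset ℝ, ContDiffOn ℝ 1 u (Ioo 0 R \ ↑S)) ∧
    u 0 = 0 ∧ u R = 0 ∧
    IntegrableOn (fun r => r * (deriv u r) ^ 2 + (u r) ^ 2 / r) (Ioo 0 R)

/-- The admissible class `𝒜`. -/
def Admissible (α R : ℝ) (v : ℝ → ℝ) : Prop :=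
  (∃ K : NNReal, LipschitzOnWith K v (Icc 0 R)) ∧ v 0 = 0 ∧ v R = 0 ∧ FiniteEnergy α R v

end

lemma abs_besselJ0_term (x : ℝ) (m : ℕ) :
    |(-1 : ℝ) ^ m * (x / 2) ^ (2 * m) / (m.factorial : ℝ) ^ 2|
      = ((x / 2) ^ 2) ^ m / (m.factorial : ℝ) ^ 2 := by
  rw [abs_div, abs_mul, abs_pow, abs_neg, abs_one, one_pow, one_mul, pow_mul, abs_pow,
    abs_of_nonneg (sq_nonneg _), abs_of_nonneg (sq_nonneg _)]

lemma summable_pow_div_factorial_sq {y : ℝ} (hy : 0 ≤ y) :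
    Summable fun m : ℕ => y ^ m / (m.factorial : ℝ) ^ 2 := by
  refine (Real.summable_pow_div_factorial y).of_nonneg_of_le (fun m => by positivity) fun m => ?_
  have h1 : (1 : ℝ) ≤ m.factorial := by exact_mod_cast m.factorial_pos
  gcongr
  nlinarith

lemma summable_besselJ0_series (x : ℝ) :
    Summable fun m : ℕ => (-1 : ℝ) ^ m * (x / 2) ^ (2 * m) / (m.factorial : ℝ) ^ 2 :=
  Summable.of_abs <| by
    simpa only [abs_besselJ0_term] using summable_pow_div_factorial_sq (sq_nonneg (x / 2))

lemma besselJ0_zero : besselJ0 0 = 1 := by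
  rw [besselJ0, tsum_eq_single 0 fun m hm => by simp [hm]]
  simp

lemma continuousOn_besselJ0 : ContinuousOn besselJ0 (Icc 0 3) := by
  refine continuousOn_tsum (fun m => by fun_prop)
    (summable_pow_div_factorial_sq (by norm_num : (0 : ℝ) ≤ (3 / 2) ^ 2)) fun m x hx => ?_
  rw [Real.norm_eq_abs, abs_besselJ0_term]
  gcongr <;> linarith [hx.1, hx.2]

lemma besselJ0_three_neg : besselJ0 3 < 0 := by
  -- `J₀(3) = 1 - ∑ (-1)ᵐ f m` with `f` antitone, and four terms of that sum already exceed `1`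
  set f : ℕ → ℝ := fun m => (9 / 4) ^ (m + 1) / ((m + 1).factorial : ℝ) ^ 2 with hf
  have hshift : ∀ m : ℕ,
      (-1 : ℝ) ^ (m + 1) * (3 / 2) ^ (2 * (m + 1)) / ((m + 1).factorial : ℝ) ^ 2
        = -((-1) ^ m * f m) := fun m => by
    rw [hf, pow_mul]
    norm_num
    ring
  have hsum : Summable fun m : ℕ => (-1 : ℝ) ^ m * f m := by
    have := (summable_nat_add_iff 1).mpr (summable_besselJ0_series 3)
    simpa only [hshift, summable_neg_iff] using this
  have hJ : besselJ0 3 = 1 - ∑' m, (-1 : ℝ) ^ m * f m := by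
    rw [besselJ0, (summable_besselJ0_series 3).tsum_eq_zero_add]
    simp only [hshift, tsum_neg]
    norm_num
    ring
  have hanti : Antitone f := antitone_nat_of_succ_le fun m => by
    have hstep : f (m + 1) = f m * (9 / 4 / ((m : ℝ) + 2) ^ 2) := by
      simp only [hf, Nat.factorial_succ (m + 1), Nat.cast_mul, pow_succ]
      push_cast
      field_simp
      ring
    rw [hstep]
    refine mul_le_of_le_one_right (by positivity) ?_
    rw [div_le_one (by positivity)]
    nlinarith [m.cast_nonneg (α := ℝ)]
  have hlow : ∑ i ∈ Finset.range (2 * 2), (-1 : ℝ) ^ i * f i ≤ ∑' m, (-1 : ℝ) ^ m * f m :=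
    hanti.alternating_series_le_tendsto hsum.hasSum.tendsto_sum_nat 2
  have hpartial : ∑ i ∈ Finset.range (2 * 2), (-1 : ℝ) ^ i * f i = 20583 / 16384 := by
    norm_num [Finset.sum_range_succ, hf, Nat.factorial]
  clear_value f
  linarith

lemma besselR0_le_three : besselR0 ≤ 3 := by
  have hzero : (0 : ℝ) ∈ Icc (besselJ0 3) (besselJ0 0) :=
    Set.mem_Icc.mpr ⟨besselJ0_three_neg.le, besselJ0_zero ▸ zero_le_one⟩
  obtain ⟨z, hz, hz0⟩ :=
    intermediate_value_Icc' (by norm_num : (0 : ℝ) ≤ 3) continuousOn_besselJ0 hzero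
  have hzpos : 0 < z := hz.1.lt_of_ne fun h => by simp [← h, besselJ0_zero] at hz0
  have hmem : z ∈ {x : ℝ | 0 < x ∧ besselJ0 x = 0} := ⟨hzpos, hz0⟩
  exact (csInf_le ⟨0, fun x hx => hx.1.le⟩ hmem).trans hz.2

lemma besselR0_nonneg : 0 ≤ besselR0 := Real.sInf_nonneg fun _ hx => hx.1.le

lemma integrableOn_Ioo_and_integral_eq_add {f g h : ℝ → ℝ} {l m u : ℝ}
    (hlm : l ≤ m) (hmu : m ≤ u)
    (hg : IntervalIntegrable g volume l m) (hh : IntervalIntegrable h volume m u)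
    (hfg : EqOn f g (Ioo l m)) (hfh : EqOn f h (Ioo m u)) :
    IntegrableOn f (Ioo l u) ∧
      ∫ r in Ioo l u, f r = (∫ r in l..m, g r) + ∫ r in m..u, h r := by
  have hf₁ : IntervalIntegrable f volume l m := hg.congr_uIoo (uIoo_of_le hlm ▸ hfg.symm)
  have hf₂ : IntervalIntegrable f volume m u := hh.congr_uIoo (uIoo_of_le hmu ▸ hfh.symm)
  refine ⟨(intervalIntegrable_iff_integrableOn_Ioo_of_le (hlm.trans hmu)).mp (hf₁.trans hf₂),
    ?_⟩
  rw [← integral_Ioc_eq_integral_Ioo, ← intervalIntegral.integral_of_le (hlm.trans hmu),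
    ← intervalIntegral.integral_add_adjacent_intervals hf₁ hf₂,
    intervalIntegral.integral_congr_Ioo_of_le hlm hfg,
    intervalIntegral.integral_congr_Ioo_of_le hmu hfh]

lemma sq_div_one_add_mul_sq_le_inv {α : ℝ} (hα : 0 < α) (x : ℝ) :
    x ^ 2 / (1 + α * x ^ 2) ≤ α⁻¹ := by
  rw [div_le_iff₀ (by positivity), mul_add, mul_one, inv_mul_cancel_left₀ hα.ne']
  linarith [inv_pos.2 hα]

lemma sq_sub_mul_pow_four_le_sq_div {α : ℝ} (hα : 0 ≤ α) (x : ℝ) :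
    x ^ 2 - α * x ^ 4 ≤ x ^ 2 / (1 + α * x ^ 2) := by
  rw [le_div_iff₀ (by positivity)]
  nlinarith [show 0 ≤ α ^ 2 * x ^ 6 by positivity]

lemma continuous_sq_div_one_add_mul_sq {α : ℝ} (hα : 0 ≤ α) :
    Continuous fun x : ℝ => x ^ 2 / (1 + α * x ^ 2) :=
  Continuous.div (by fun_prop) (by fun_prop) fun x => by positivity

lemma exists_pos_eq_zero_of_quartic_bounds {g : ℝ → ℝ} (hg : Continuous g) {p q k C : ℝ}
    (hp : 0 < p) (hk : k < 0) (hlow : ∀ t, t ^ 2 * p - t ^ 4 * q ≤ g t)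
    (hup : ∀ t, g t ≤ t ^ 2 * k + C) : ∃ t > 0, g t = 0 := by
  obtain ⟨t₁, ht₁, hg₁⟩ : ∃ t > 0, 0 < g t := by
    set s := p / (|q| + 1)
    have hs : 0 < s := by positivity
    have hsq : s * |q| < p := by
      rw [div_mul_eq_mul_div, div_lt_iff₀ (by positivity)]
      nlinarith [abs_nonneg q]
    refine ⟨√s, Real.sqrt_pos.2 hs, lt_of_lt_of_le ?_ (hlow _)⟩
    rw [show √s ^ 4 = (√s ^ 2) ^ 2 by ring, Real.sq_sqrt hs.le]
    nlinarith [mul_pos hs (sub_pos.2 hsq), mul_le_mul_of_nonneg_left (le_abs_self q) (sq_nonneg s)]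
  obtain ⟨t₂, ht₂, hg₂⟩ : ∃ t > 0, g t < 0 := by
    have hs : 0 < (|C| + 1) / -k := div_pos (by positivity) (neg_pos.2 hk)
    refine ⟨√((|C| + 1) / -k), Real.sqrt_pos.2 hs, (hup _).trans_lt ?_⟩
    rw [Real.sq_sqrt hs.le, div_mul_eq_mul_div, mul_div_assoc, div_neg, div_self hk.ne]
    linarith [le_abs_self C]
  obtain ⟨t, ht, hgt⟩ := intermediate_value_uIcc hg.continuousOn
    (mem_uIcc.2 (Or.inr ⟨hg₂.le, hg₁.le⟩) : (0 : ℝ) ∈ uIcc (g t₁) (g t₂))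
  exact ⟨t, (lt_inf_iff.2 ⟨ht₁, ht₂⟩).trans_le ht.1, hgt⟩

section Nehari

variable {α κ R : ℝ} {n : ℤ} {u : ℝ → ℝ}

noncomputable def dirichletEnergy (n : ℤ) (R : ℝ) (u : ℝ → ℝ) : ℝ :=
  ∫ r in Ioo 0 R, (r * deriv u r ^ 2 + ((n : ℝ) ^ 2 / r) * u r ^ 2)

noncomputable def weightedMass (R : ℝ) (u : ℝ → ℝ) : ℝ := ∫ r in Ioo 0 R, r * u r ^ 2

noncomputable def saturatedMass (α R : ℝ) (u : ℝ → ℝ) : ℝ :=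
  ∫ r in Ioo 0 R, r * (u r ^ 2 / (1 + α * u r ^ 2))

lemma gammaK_eq_of_integrableOn
    (hE : IntegrableOn (fun r => r * deriv u r ^ 2 + ((n : ℝ) ^ 2 / r) * u r ^ 2) (Ioo 0 R))
    (hM : IntegrableOn (fun r => r * u r ^ 2) (Ioo 0 R))
    (hS : IntegrableOn (fun r => r * (u r ^ 2 / (1 + α * u r ^ 2))) (Ioo 0 R)) :
    gammaK α n κ R u = dirichletEnergy n R u / 2 - (α⁻¹ - κ) * weightedMass R u
      + α⁻¹ * saturatedMass α R u := by
  have hsplit : ∀ r, r * deriv u r ^ 2 + ((n : ℝ) ^ 2 / r) * u r ^ 2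
      - 2 * (α⁻¹ - κ) * r * u r ^ 2 + 2 * α⁻¹ * r * u r ^ 2 / (1 + α * u r ^ 2)
      = (r * deriv u r ^ 2 + ((n : ℝ) ^ 2 / r) * u r ^ 2) - 2 * (α⁻¹ - κ) * (r * u r ^ 2)
        + 2 * α⁻¹ * (r * (u r ^ 2 / (1 + α * u r ^ 2))) := fun r => by ring
  simp only [gammaK, hsplit]
  rw [integral_add, integral_sub, integral_const_mul, integral_const_mul, dirichletEnergy,
    weightedMass, saturatedMass]
  · ring
  exacts [hE, hM.const_mul _, hE.sub (hM.const_mul _), hS.const_mul _]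

lemma ContinuousOn.integrableOn_mul_comp (hu : ContinuousOn u (Icc 0 R)) {φ : ℝ → ℝ}
    (hφ : Continuous φ) :
    IntegrableOn (fun r => r * φ (u r)) (Ioo 0 R) :=
  ((continuousOn_id.mul (hφ.comp_continuousOn hu)).integrableOn_Icc).mono_set Ioo_subset_Icc_self

lemma MemX'.const_mul (hu : MemX' R u) (t : ℝ) : MemX' R fun r => t * u r := by
  obtain ⟨hcont, ⟨S, hS⟩, h0, hR, hint⟩ := hu
  refine ⟨continuousOn_const.mul hcont, ⟨S, contDiffOn_const.mul hS⟩, by simp [h0], by simp [hR],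
    ?_⟩
  have hscale : (fun r => r * deriv (fun r => t * u r) r ^ 2 + (t * u r) ^ 2 / r)
      = fun r => t ^ 2 * (r * deriv u r ^ 2 + u r ^ 2 / r) := by
    ext r
    rw [deriv_const_mul_field']
    ring
  rw [hscale]
  exact hint.const_mul _

lemma MemX'.integrableOn_dirichlet (hu : MemX' R u) (n : ℤ) :
    IntegrableOn (fun r => r * deriv u r ^ 2 + ((n : ℝ) ^ 2 / r) * u r ^ 2) (Ioo 0 R) := by
  have hint := hu.2.2.2.2
  have h₁ : IntegrableOn (fun r => r * deriv u r ^ 2) (Ioo 0 R) :=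
    hint.mono' (measurable_id.mul ((measurable_deriv u).pow_const 2)).aestronglyMeasurable
      (ae_restrict_of_forall_mem measurableSet_Ioo fun r hr => by
        rw [Real.norm_eq_abs, abs_of_nonneg (by positivity [hr.1.le])]
        have : 0 ≤ u r ^ 2 / r := div_nonneg (sq_nonneg _) hr.1.le
        linarith)
  have h₂ : IntegrableOn (fun r => u r ^ 2 / r) (Ioo 0 R) :=
    hint.mono' ((((hu.1.mono Ioo_subset_Icc_self).pow 2).div continuousOn_id
        fun r hr => hr.1.ne').aestronglyMeasurable measurableSet_Ioo)
      (ae_restrict_of_forall_mem measurableSet_Ioo fun r hr => by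
        rw [Real.norm_eq_abs, abs_of_nonneg (div_nonneg (sq_nonneg _) hr.1.le)]
        have : 0 ≤ r * deriv u r ^ 2 := mul_nonneg hr.1.le (sq_nonneg _)
        linarith)
  refine (h₁.add (h₂.const_mul ((n : ℝ) ^ 2))).congr_fun (fun r _ => ?_) measurableSet_Ioo
  simp only [Pi.add_apply]
  ring

lemma dirichletEnergy_const_mul (t : ℝ) :
    dirichletEnergy n R (fun r => t * u r) = t ^ 2 * dirichletEnergy n R u := by
  simp only [dirichletEnergy, deriv_const_mul_field', ← integral_const_mul]
  congr 1 with r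
  ring

lemma weightedMass_const_mul (t : ℝ) :
    weightedMass R (fun r => t * u r) = t ^ 2 * weightedMass R u := by
  simp only [weightedMass, ← integral_const_mul]
  congr 1 with r
  ring

lemma saturatedMass_le (hα : 0 < α) (hR : 0 ≤ R) (u : ℝ → ℝ) :
    saturatedMass α R u ≤ α⁻¹ * (R ^ 2 / 2) := by
  have hbound : IntegrableOn (fun r => α⁻¹ * r) (Ioo 0 R) :=
    (continuous_const.mul continuous_id).integrableOn_Icc.mono_set Ioo_subset_Icc_self
  calc saturatedMass α R u ≤ ∫ r in Ioo 0 R, α⁻¹ * r :=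
        integral_mono_of_nonneg (ae_restrict_of_forall_mem measurableSet_Ioo fun r hr => by
            simp only [Pi.zero_apply]; positivity [hr.1.le]) hbound
          (ae_restrict_of_forall_mem measurableSet_Ioo fun r hr => by
            rw [mul_comm α⁻¹]
            exact mul_le_mul_of_nonneg_left (sq_div_one_add_mul_sq_le_inv hα _) hr.1.le)
    _ = α⁻¹ * (R ^ 2 / 2) := by
        rw [integral_const_mul, ← integral_Ioc_eq_integral_Ioo,
          ← intervalIntegral.integral_of_le hR, integral_id]
        ring

lemma saturatedMass_const_mul_ge (hα : 0 ≤ α) (hu : ContinuousOn u (Icc 0 R)) (t : ℝ) :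
    t ^ 2 * weightedMass R u - α * t ^ 4 * ∫ r in Ioo 0 R, r * u r ^ 4
      ≤ saturatedMass α R (fun r => t * u r) := by
  have hM : IntegrableOn (fun r => r * u r ^ 2) (Ioo 0 R) :=
    hu.integrableOn_mul_comp (continuous_pow 2)
  have hQ : IntegrableOn (fun r => r * u r ^ 4) (Ioo 0 R) :=
    hu.integrableOn_mul_comp (continuous_pow 4)
  have hS : IntegrableOn (fun r => r * ((t * u r) ^ 2 / (1 + α * (t * u r) ^ 2))) (Ioo 0 R) :=
    (continuousOn_const.mul hu).integrableOn_mul_comp (continuous_sq_div_one_add_mul_sq hα)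
  rw [weightedMass, saturatedMass, ← integral_const_mul, ← integral_const_mul,
    ← integral_sub (hM.const_mul _) (hQ.const_mul _)]
  refine setIntegral_mono_on ((hM.const_mul _).sub (hQ.const_mul _)) hS measurableSet_Ioo
    fun r hr => ?_
  calc t ^ 2 * (r * u r ^ 2) - α * t ^ 4 * (r * u r ^ 4)
      = r * ((t * u r) ^ 2 - α * (t * u r) ^ 4) := by ring
    _ ≤ _ := mul_le_mul_of_nonneg_left (sq_sub_mul_pow_four_le_sq_div hα _) hr.1.le

lemma continuous_saturatedMass_const_mul (hα : 0 < α) (hu : ContinuousOn u (Icc 0 R)) :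
    Continuous fun t => saturatedMass α R fun r => t * u r := by
  have hφ := continuous_sq_div_one_add_mul_sq hα.le
  refine continuous_of_dominated (bound := fun r => α⁻¹ * r) (fun t => ?_) (fun t => ?_)
    ((continuous_const.mul continuous_id).integrableOn_Icc.mono_set Ioo_subset_Icc_self)
    (Eventually.of_forall fun r => continuous_const.mul (hφ.comp (continuous_mul_const (u r))))
  · exact ((continuousOn_id.mul (hφ.comp_continuousOn (continuousOn_const.mul hu))).mono
      Ioo_subset_Icc_self).aestronglyMeasurable measurableSet_Ioo
  · refine ae_restrict_of_forall_mem measurableSet_Ioo fun r hr => ?_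
    rw [Real.norm_eq_abs, abs_of_nonneg (by positivity [hr.1.le]), mul_comm α⁻¹]
    exact mul_le_mul_of_nonneg_left (sq_div_one_add_mul_sq_le_inv hα _) hr.1.le

theorem MemX'.exists_pos_gammaK_const_mul_eq_zero (hu : MemX' R u) (hα : 0 < α) (hR : 0 ≤ R)
    (hpos : 0 < dirichletEnergy n R u / 2 + κ * weightedMass R u)
    (hneg : dirichletEnergy n R u / 2 - (α⁻¹ - κ) * weightedMass R u < 0) :
    ∃ t > 0, gammaK α n κ R (fun r => t * u r) = 0 := by
  set k := dirichletEnergy n R u / 2 - (α⁻¹ - κ) * weightedMass R u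
  have hγ : ∀ t, gammaK α n κ R (fun r => t * u r)
      = t ^ 2 * k + α⁻¹ * saturatedMass α R (fun r => t * u r) := fun t => by
    have hut := hu.const_mul t
    rw [gammaK_eq_of_integrableOn (hut.integrableOn_dirichlet n)
      (hut.1.integrableOn_mul_comp (continuous_pow 2))
      (hut.1.integrableOn_mul_comp (continuous_sq_div_one_add_mul_sq hα.le)),
      dirichletEnergy_const_mul, weightedMass_const_mul]
    ring
  simp only [hγ]
  refine exists_pos_eq_zero_of_quartic_bounds
    (g := fun t => t ^ 2 * k + α⁻¹ * saturatedMass α R (fun r => t * u r))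
    (q := ∫ r in Ioo 0 R, r * u r ^ 4) (C := α⁻¹ * (α⁻¹ * (R ^ 2 / 2)))
    (((continuous_pow 2).mul continuous_const).add
      (continuous_const.mul (continuous_saturatedMass_const_mul hα hu.1))) hpos hneg
    (fun t => ?_) (fun t => ?_)
  · have h := mul_le_mul_of_nonneg_left (saturatedMass_const_mul_ge hα.le hu.1 t)
      (inv_nonneg.2 hα.le)
    have hinv : α⁻¹ * α = 1 := inv_mul_cancel₀ hα.ne'
    linear_combination h + t ^ 4 * (∫ r in Ioo 0 R, r * u r ^ 4) * hinv
  · have h := mul_le_mul_of_nonneg_left (saturatedMass_le hα hR fun r => t * u r)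
      (inv_nonneg.2 hα.le)
    linarith

end Nehari

section Tent

open Topology

variable {a b r : ℝ}

lemma tent_of_le (h : r ≤ a) : tent a b r = b / a * r := if_pos h

lemma tent_of_lt (h : a < r) : tent a b r = b / a * (2 * a - r) := if_neg h.not_ge

lemma continuous_tent (a b : ℝ) : Continuous (tent a b) :=
  Continuous.if_le (by fun_prop) (by fun_prop) continuous_id continuous_const
    fun x hx => by rw [hx]; ring

lemma tent_eventuallyEq_of_lt (h : r < a) : tent a b =ᶠ[𝓝 r] fun x => b / a * x :=
  eventually_of_mem (Iio_mem_nhds h) fun _ hx => tent_of_le (le_of_lt hx)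

lemma tent_eventuallyEq_of_gt (h : a < r) : tent a b =ᶠ[𝓝 r] fun x => b / a * (2 * a - x) :=
  eventually_of_mem (Ioi_mem_nhds h) fun _ hx => tent_of_lt hx

lemma deriv_tent_of_lt (h : r < a) : deriv (tent a b) r = b / a := by
  rw [(tent_eventuallyEq_of_lt h).deriv_eq]
  simp

lemma deriv_tent_of_gt (h : a < r) : deriv (tent a b) r = -(b / a) := by
  rw [(tent_eventuallyEq_of_gt h).deriv_eq]
  simp

lemma integrableOn_and_integral_tent_energy (ha : 0 < a) (b c : ℝ) :
    IntegrableOn (fun r => r * deriv (tent a b) r ^ 2 + (c / r) * tent a b r ^ 2)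
      (Ioo 0 (2 * a)) ∧
    ∫ r in Ioo 0 (2 * a), (r * deriv (tent a b) r ^ 2 + (c / r) * tent a b r ^ 2)
      = b ^ 2 * (2 + c * (4 * Real.log 2 - 2)) := by
  have h0 : (0 : ℝ) ∉ uIcc a (2 * a) := by
    rw [uIcc_of_le (by linarith)]
    exact fun h => ha.not_ge h.1
  have hlin : IntervalIntegrable (fun r => (1 + c) * r) volume a (2 * a) :=
    intervalIntegral.intervalIntegrable_id.const_mul _
  have hconst : IntervalIntegrable (fun _ => 4 * a * c) volume a (2 * a) :=
    intervalIntegrable_const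
  have hinv : IntervalIntegrable (fun r => 4 * a ^ 2 * c * r⁻¹) volume a (2 * a) :=
    (intervalIntegral.intervalIntegrable_inv (fun x hx hx0 => h0 (hx0 ▸ hx))
      continuousOn_id).const_mul _
  obtain ⟨hint, heq⟩ := integrableOn_Ioo_and_integral_eq_add (m := a) (u := 2 * a) ha.le
    (by linarith) (f := fun r => r * deriv (tent a b) r ^ 2 + (c / r) * tent a b r ^ 2)
    (g := fun r => (b / a) ^ 2 * (1 + c) * r)
    (h := fun r => (b / a) ^ 2 * ((1 + c) * r - 4 * a * c + 4 * a ^ 2 * c * r⁻¹))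
    (intervalIntegral.intervalIntegrable_id.const_mul _) (((hlin.sub hconst).add hinv).const_mul _)
    (fun r hr => by
      simp only [deriv_tent_of_lt hr.2, tent_of_le hr.2.le]
      field_simp [hr.1.ne'])
    (fun r hr => by
      have hr0 : r ≠ 0 := (ha.trans hr.1).ne'
      simp only [deriv_tent_of_gt hr.1, tent_of_lt hr.1]
      field_simp
      ring)
  refine ⟨hint, heq.trans ?_⟩
  rw [intervalIntegral.integral_const_mul, intervalIntegral.integral_const_mul,
    intervalIntegral.integral_add (hlin.sub hconst) hinv, intervalIntegral.integral_sub hlin hconst,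
    intervalIntegral.integral_const_mul, intervalIntegral.integral_const_mul,
    intervalIntegral.integral_const, intervalIntegral.integral_const_mul, integral_id, integral_id,
    integral_inv h0, smul_eq_mul, mul_div_cancel_right₀ _ ha.ne']
  field_simp
  ring

lemma weightedMass_tent (ha : 0 < a) (b : ℝ) :
    weightedMass (2 * a) (tent a b) = 2 / 3 * a ^ 2 * b ^ 2 := by
  obtain ⟨-, heq⟩ := integrableOn_Ioo_and_integral_eq_add (m := a) (u := 2 * a) ha.le
    (by linarith) (f := fun r => r * tent a b r ^ 2)
    (g := fun r => (b / a) ^ 2 * r ^ 3)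
    (h := fun r => (b / a) ^ 2 * (4 * a ^ 2 * r - 4 * a * r ^ 2 + r ^ 3))
    (Continuous.intervalIntegrable (by fun_prop) _ _)
    (Continuous.intervalIntegrable (by fun_prop) _ _)
    (fun r hr => by simp only [tent_of_le hr.2.le]; ring)
    (fun r hr => by simp only [tent_of_lt hr.1]; ring)
  rw [weightedMass, heq, intervalIntegral.integral_const_mul, intervalIntegral.integral_const_mul,
    intervalIntegral.integral_add, intervalIntegral.integral_sub,
    intervalIntegral.integral_const_mul, intervalIntegral.integral_const_mul, integral_id,
    integral_pow, integral_pow, integral_pow]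
  · field_simp
    ring
  all_goals exact Continuous.intervalIntegrable (by fun_prop) _ _

lemma dirichletEnergy_tent (ha : 0 < a) (n : ℤ) (b : ℝ) :
    dirichletEnergy n (2 * a) (tent a b) = b ^ 2 * (2 + (n : ℝ) ^ 2 * (4 * Real.log 2 - 2)) :=
  (integrableOn_and_integral_tent_energy ha b _).2

lemma memX'_tent (ha : 0 < a) (b : ℝ) : MemX' (2 * a) (tent a b) := by
  refine ⟨(continuous_tent a b).continuousOn, ⟨{a}, fun x hx => ?_⟩,
    by simp [tent_of_le ha.le], by rw [tent_of_lt (by linarith)]; ring, ?_⟩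
  · rcases lt_or_gt_of_ne (show x ≠ a by simpa using hx.2) with h | h
    · exact ((contDiff_const.mul contDiff_id).contDiffAt.congr_of_eventuallyEq
        (tent_eventuallyEq_of_lt h)).contDiffWithinAt
    · exact ((contDiff_const.mul (contDiff_const.sub contDiff_id)).contDiffAt.congr_of_eventuallyEq
        (tent_eventuallyEq_of_gt h)).contDiffWithinAt
  · simpa only [one_div, inv_mul_eq_div] using (integrableOn_and_integral_tent_energy ha b 1).1

end Tent

section TentNehari

variable {α κ a b : ℝ} {n : ℤ}

lemma dirichletEnergy_tent_add_weightedMass_pos (ha : 0 < a) (hb : 0 < b)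
    (hκ : -(besselR0 ^ 2 + (n : ℝ) ^ 2) / (2 * (2 * a) ^ 2) < κ) :
    0 < dirichletEnergy n (2 * a) (tent a b) / 2 + κ * weightedMass (2 * a) (tent a b) := by
  rw [div_lt_iff₀ (by positivity)] at hκ
  rw [dirichletEnergy_tent ha, weightedMass_tent ha]
  have hr₀ : besselR0 ^ 2 ≤ 9 := by nlinarith [besselR0_le_three, besselR0_nonneg]
  -- with `r₀ ≤ 3` the bound on `κ` leaves `1/4 + n² (2 log 2 - 13/12) > 0`
  have hcoef : 0 < 1 + (n : ℝ) ^ 2 * (2 * Real.log 2 - 1) + 2 / 3 * κ * a ^ 2 := by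
    nlinarith [Real.log_two_gt_d9, sq_nonneg (n : ℝ)]
  nlinarith [mul_pos (pow_pos hb 2) hcoef]

lemma dirichletEnergy_tent_sub_weightedMass_neg (ha : 0 < a) (hb : 0 < b) (hκ : κ < α⁻¹)
    (hR : 2 * a > √(6 * (1 + (n : ℝ) ^ 2 * (2 * Real.log 2 - 1)) / (α⁻¹ - κ))) :
    dirichletEnergy n (2 * a) (tent a b) / 2 - (α⁻¹ - κ) * weightedMass (2 * a) (tent a b)
      < 0 := by
  rw [gt_iff_lt, Real.sqrt_lt' (by positivity), div_lt_iff₀ (sub_pos.2 hκ)] at hR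
  rw [dirichletEnergy_tent ha, weightedMass_tent ha]
  nlinarith [pow_pos hb 2]

end TentNehari

theorem stmt12_general (α : ℝ) (hα : 0 < α) (n : ℤ) (R κ : ℝ)
    (hκ1 : -(besselR0 ^ 2 + (n : ℝ) ^ 2) / (2 * R ^ 2) < κ) (hκ2 : κ < α⁻¹)
    (hR : R > Real.sqrt (6 * (1 + (n : ℝ) ^ 2 * (2 * Real.log 2 - 1)) / (α⁻¹ - κ))) :
    (∀ b > (0 : ℝ), ∃ t₀ > (0 : ℝ),
        gammaK α n κ R (fun r => t₀ * tent (R / 2) b r) = 0) ∧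
    {u : ℝ → ℝ | MemX' R u ∧ (∃ r ∈ Icc (0 : ℝ) R, u r ≠ 0) ∧
        gammaK α n κ R u = 0}.Nonempty := by
  obtain ⟨a, rfl⟩ : ∃ a, R = 2 * a := ⟨R / 2, by ring⟩
  have ha : 0 < a := by linarith [(Real.sqrt_nonneg _).trans_lt hR]
  rw [mul_div_cancel_left₀ a two_ne_zero]
  have hzero : ∀ b > (0 : ℝ), ∃ t₀ > (0 : ℝ),
      gammaK α n κ (2 * a) (fun r => t₀ * tent a b r) = 0 :=
    fun b hb => (memX'_tent ha b).exists_pos_gammaK_const_mul_eq_zero hα (by positivity)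
      (dirichletEnergy_tent_add_weightedMass_pos ha hb hκ1)
      (dirichletEnergy_tent_sub_weightedMass_neg ha hb hκ2 hR)
  obtain ⟨t₀, ht₀, hγ⟩ := hzero 1 one_pos
  refine ⟨hzero, _, (memX'_tent ha 1).const_mul t₀, ⟨a, ⟨ha.le, by linarith⟩, ?_⟩, hγ⟩
  simp [tent_of_le le_rfl, ha.ne', ht₀.ne']

/-- the Nehari set is nonempty. -/
theorem stmt12 (α : ℝ) (hα : 0 < α) (n : ℤ) (hn : 1 ≤ |n|) (R κ : ℝ) (hR0 : 0 < R)
    (hκ1 : -(besselR0 ^ 2 + (n : ℝ) ^ 2) / (2 * R ^ 2) < κ) (hκ2 : κ < α⁻¹)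
    (hR : R > Real.sqrt (6 * (1 + (n : ℝ) ^ 2 * (2 * Real.log 2 - 1)) / (α⁻¹ - κ))) :
    (∀ b > (0 : ℝ), ∃ t₀ > (0 : ℝ),
        gammaK α n κ R (fun r => t₀ * tent (R / 2) b r) = 0) ∧
    {u : ℝ → ℝ | MemX' R u ∧ (∃ r ∈ Icc (0 : ℝ) R, u r ≠ 0) ∧
        gammaK α n κ R u = 0}.Nonempty :=
  stmt12_general α hα n R κ hκ1 hκ2 hR
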